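/- Let p be a prime, let G and H be finite-dimensional vector spaces over 𝔽_p, and let A ⊆ G × H be a transverse set. Let U ≤ G and V′ ≤ H be subspaces, let d be a nonnegative integer, and let β : G × H → 𝔽_p^d be a bilinear map. Suppose X ⊆ U is a subset with |X| ≥ (1 − p^{−d}/3)|U| such that for every x ∈ X one has {y ∈ V′ : β(x,y) = 0} ⊆ A_{x·}. Then {(x,y) ∈ U × V′ : β(x,y) = 0} ⊆ A. -/

import Mathlib

/-!
Fix `(x₀, y)` in the variety and let `W = {x ∈ U : β(x, y) = 0}`, a subgroup of index at most
`p^d` in `U`. The exceptional set `U \ X` has at most `p^{-d}|U|/3 ≤ |W|/3` elements, so `X ∩ W`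
fills more than half of `W`, and therefore `x₀ = x₁ + x₂` with `x₁, x₂ ∈ X ∩ W`. Both `(xᵢ, y)` lie
in `A` by hypothesis, and the column `A_{·y}` is a subspace, so `(x₀, y) ∈ A`.
-/

namespace AddSubgroup

variable {G : Type*} [AddGroup G]

theorem card_le_card_inf_ker_mul_card {N : Type*} [AddGroup N] [Finite N]
    (K : AddSubgroup G) (f : G →+ N) :
    Nat.card K ≤ Nat.card ↥(K ⊓ f.ker) * Nat.card N := by
  have hsplit := relIndex_mul_relIndex (⊥ : AddSubgroup G) (K ⊓ f.ker) K bot_le inf_le_left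
  rw [relIndex_bot_left, relIndex_bot_left, inf_relIndex_left, relIndex_ker] at hsplit
  rw [← hsplit]
  exact Nat.mul_le_mul_left _ (Finite.card_subtype_le _)

theorem exists_add_eq_of_card_lt_two_mul (K : AddSubgroup G) [Finite K] {S : Set G}
    (hSK : S ⊆ K) {x : G} (hx : x ∈ K) (hS : Nat.card K < 2 * Nat.card S) :
    ∃ a ∈ S, ∃ b ∈ S, a + b = x := by
  have hK : (K : Set G).Finite := Set.toFinite _
  set T := (fun b => x + -b) '' S
  have hTK : T ⊆ K := by
    rintro _ ⟨b, hb, rfl⟩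
    exact K.add_mem hx (K.neg_mem (hSK hb))
  have hT : T.ncard = S.ncard := Set.ncard_image_of_injective _ fun a b h => by simpa using h
  suffices (S ∩ T).Nonempty by
    obtain ⟨a, haS, b, hbS, rfl⟩ := this
    exact ⟨_, haS, b, hbS, by simp⟩
  by_contra hST
  have hdisj : Disjoint S T :=
    Set.disjoint_iff_inter_eq_empty.2 (Set.not_nonempty_iff_eq_empty.1 hST)
  have hunion := Set.ncard_le_ncard (Set.union_subset hSK hTK) hK
  rw [Set.ncard_union_eq hdisj (hK.subset hSK) (hK.subset hTK), hT] at hunion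
  rw [Nat.card_coe_set_eq, show Nat.card K = (K : Set G).ncard from Nat.card_coe_set_eq _] at hS
  omega

end AddSubgroup

theorem Set.card_lt_two_mul_card_inter {α : Type*} {U X W : Set α} (hU : U.Finite)
    (hXU : X ⊆ U) (hWU : W ⊆ U) (hW : W.Nonempty) {c : ℝ}
    (hX : (1 - c / 3) * Nat.card U ≤ Nat.card X) (hcW : c * Nat.card U ≤ Nat.card W) :
    Nat.card W < 2 * Nat.card ↥(X ∩ W) := by
  simp only [Nat.card_coe_set_eq] at hX hcW ⊢
  have hcover : W.ncard ≤ (X ∩ W).ncard + (U \ X).ncard := by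
    refine (Set.ncard_le_ncard (t := (X ∩ W) ∪ (U \ X)) ?_
      ((hU.subset (Set.inter_subset_left.trans hXU)).union hU.sdiff)).trans
      (Set.ncard_union_le _ _)
    intro w hw
    by_cases hwX : w ∈ X
    · exact Or.inl ⟨hwX, hw⟩
    · exact Or.inr ⟨hWU hw, hwX⟩
  have hsplit : (U \ X).ncard + X.ncard = U.ncard := Set.ncard_sdiff_add_ncard_of_subset hXU hU
  have hWpos : 0 < W.ncard := (Set.ncard_pos (hU.subset hWU)).2 hW
  have hcover' : (W.ncard : ℝ) ≤ (X ∩ W).ncard + (U \ X).ncard := by exact_mod_cast hcover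
  have hsplit' : ((U \ X).ncard : ℝ) + X.ncard = U.ncard := by exact_mod_cast hsplit
  have hWpos' : (0 : ℝ) < W.ncard := by exact_mod_cast hWpos
  exact_mod_cast (by linarith : (W.ncard : ℝ) < 2 * (X ∩ W).ncard)

theorem bilinear_variety_in_transverse_general
    (p : ℕ) [Fact p.Prime]
    (G H : Type) [AddCommGroup G] [AddCommGroup H]
    [Module (ZMod p) G] [Module (ZMod p) H]
    [Finite G]
    (A : Set (G × H))
    (hcol : ∀ y : H, ∃ S : Submodule (ZMod p) G, {x : G | (x, y) ∈ A} = ↑S)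
    (U : Submodule (ZMod p) G) (V' : Submodule (ZMod p) H)
    (d : ℕ) (β : G →ₗ[ZMod p] H →ₗ[ZMod p] (Fin d → ZMod p))
    (X : Set G) (hXU : X ⊆ (U : Set G))
    (hXcard : (Nat.card X : ℝ) ≥ (1 - (p : ℝ) ^ (-(d : ℤ)) / 3) * Nat.card U)
    (hX : ∀ x ∈ X, {y : H | y ∈ V' ∧ β x y = 0} ⊆ {y : H | (x, y) ∈ A}) :
    {z : G × H | z.1 ∈ U ∧ z.2 ∈ V' ∧ β z.1 z.2 = 0} ⊆ A := by
  rintro ⟨x₀, y⟩ ⟨hx₀U, hyV, hβ⟩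
  obtain ⟨C, hC⟩ := hcol y
  set W := U.toAddSubgroup ⊓ (β.flip y).toAddMonoidHom.ker
  have hindex : (p : ℝ) ^ (-(d : ℤ)) * Nat.card U ≤ Nat.card W := by
    have hUW := U.toAddSubgroup.card_le_card_inf_ker_mul_card (β.flip y).toAddMonoidHom
    rw [Nat.card_fun, Nat.card_zmod, Nat.card_fin] at hUW
    have hp : (0 : ℝ) < p := by exact_mod_cast (Fact.out : p.Prime).pos
    rw [zpow_neg, zpow_natCast, inv_mul_le_iff₀ (by positivity), mul_comm]
    exact_mod_cast hUW
  obtain ⟨x₁, hx₁, x₂, hx₂, rfl⟩ := W.exists_add_eq_of_card_lt_two_mul Set.inter_subset_right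
    ⟨hx₀U, hβ⟩ (Set.card_lt_two_mul_card_inter (Set.toFinite _) hXU (fun x hx => hx.1)
      ⟨x₀, hx₀U, hβ⟩ hXcard hindex)
  have hXWC : X ∩ W ⊆ C := fun x hx => hC ▸ hX x hx.1 ⟨hyV, hx.2.2⟩
  show x₁ + x₂ ∈ {x | (x, y) ∈ A}
  rw [hC]
  exact C.add_mem (hXWC hx₁) (hXWC hx₂)

/-- The final step of the proof of Theorem 4 of the paper: if almost all
`x ∈ U` satisfy `{y ∈ V' : β(x,y) = 0} ⊆ A_{x·}`, then the whole bilinear variety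
`{(x,y) ∈ U × V' : β(x,y) = 0}` is contained in the transverse set `A`. -/
theorem bilinear_variety_in_transverse
    (p : ℕ) [Fact p.Prime]
    (G H : Type) [AddCommGroup G] [AddCommGroup H]
    [Module (ZMod p) G] [Module (ZMod p) H]
    [FiniteDimensional (ZMod p) G] [FiniteDimensional (ZMod p) H]
    [Finite G] [Finite H]
    (A : Set (G × H))
    (hrow : ∀ x : G, ∃ S : Submodule (ZMod p) H, {y : H | (x, y) ∈ A} = ↑S)
    (hcol : ∀ y : H, ∃ S : Submodule (ZMod p) G, {x : G | (x, y) ∈ A} = ↑S)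
    (U : Submodule (ZMod p) G) (V' : Submodule (ZMod p) H)
    (d : ℕ) (β : G →ₗ[ZMod p] H →ₗ[ZMod p] (Fin d → ZMod p))
    (X : Set G) (hXU : X ⊆ (U : Set G))
    (hXcard : (Nat.card X : ℝ) ≥ (1 - (p : ℝ) ^ (-(d : ℤ)) / 3) * Nat.card U)
    (hX : ∀ x ∈ X, {y : H | y ∈ V' ∧ β x y = 0} ⊆ {y : H | (x, y) ∈ A}) :
    {z : G × H | z.1 ∈ U ∧ z.2 ∈ V' ∧ β z.1 z.2 = 0} ⊆ A :=
  bilinear_variety_in_transverse_general p G H A hcol U V' d β X hXU hXcard hX
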